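/- arXiv:1810.13309 — 2 statements merged into one kernel-verified Lean document; each statement's English description precedes it below -/
import Mathlib

section
/- For every p ∈ (0,1) and every v ∈ Int C, the second derivative of L_p at v in the direction w equals (−η(v,v))^{(p−4)/2} · ( −η(v,v)·η(w,w) + (2−p)·η(v,w)² ), and this quantity is strictly positive for every w ≠ 0. -/
/-- The Minkowski bilinear form on ℝ^{1+n}: η(v,w) = -v₀w₀ + Σᵢ vᵢwᵢ. -/
noncomputable def eta {n : ℕ} (v w : Fin (n + 1) → ℝ) : ℝ :=
  -(v 0 * w 0) + ∑ i : Fin n, v i.succ * w i.succ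

/-- The interior of the future causal cone: Int C = {v : η(v,v) < 0 and v₀ > 0}. -/
def FutureConeInt (n : ℕ) : Set (Fin (n + 1) → ℝ) :=
  {v | eta v v < 0 ∧ 0 < v 0}

/-- The Lagrangian L_p(v) = -(1/p)(-η(v,v))^{p/2}. -/
noncomputable def Lp {n : ℕ} (p : ℝ) (v : Fin (n + 1) → ℝ) : ℝ :=
  -(1 / p) * (-eta v v) ^ (p / 2)

/-
Writing `Q u = -η(u, u)`, one has `L_p = -(1/p) Q^{p/2}` and `dL_p(u) = Q(u)^{p/2-1} η(u, ·)` on the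
open set `{η(u,u) < 0}`; differentiating once more gives the formula. For positivity, the
η-orthogonal complement of a timelike vector `v` is spacelike (Cauchy–Schwarz on the spatial part),
which yields the reversed Cauchy–Schwarz inequality `η(v,v) η(w,w) ≤ η(v,w)²`. Then
`-η(v,v) η(w,w) + (2-p) η(v,w)² ≥ (1-p) η(v,w)²`, which is positive unless `η(v,w) = 0`, and in
that case `w` itself is spacelike.
-/

open Topology

variable {n : ℕ}

lemma eta_eq_neg_mul_add_dotProduct (v w : Fin (n + 1) → ℝ) :
    eta v w = -(v 0 * w 0) + Fin.tail v ⬝ᵥ Fin.tail w := rfl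

lemma eta_comm (v w : Fin (n + 1) → ℝ) : eta v w = eta w v := by
  simp only [eta_eq_neg_mul_add_dotProduct, dotProduct_comm, mul_comm]

noncomputable def minkowskiForm (n : ℕ) :
    (Fin (n + 1) → ℝ) →L[ℝ] (Fin (n + 1) → ℝ) →L[ℝ] ℝ :=
  -(ContinuousLinearMap.mul ℝ ℝ).bilinearComp (ContinuousLinearMap.proj 0)
      (ContinuousLinearMap.proj 0) +
    ∑ i : Fin n, (ContinuousLinearMap.mul ℝ ℝ).bilinearComp
      (ContinuousLinearMap.proj i.succ) (ContinuousLinearMap.proj i.succ)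

@[simp]
lemma minkowskiForm_apply (v w : Fin (n + 1) → ℝ) : minkowskiForm n v w = eta v w := by
  simp [minkowskiForm, eta]

lemma eta_sub_smul_self (v w : Fin (n + 1) → ℝ) (c : ℝ) :
    eta (w - c • v) (w - c • v) = eta w w - 2 * c * eta v w + c ^ 2 * eta v v := by
  simp only [← minkowskiForm_apply, map_sub, map_smul, sub_apply, smul_apply, smul_eq_mul]
  simp only [minkowskiForm_apply, eta_comm w v]
  ring

lemma eta_sub_smul_right (v w : Fin (n + 1) → ℝ) (c : ℝ) :
    eta v (w - c • v) = eta v w - c * eta v v := by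
  simp only [← minkowskiForm_apply, map_sub, map_smul, smul_eq_mul]

lemma sq_dotProduct_le {ι : Type*} [Fintype ι] (x y : ι → ℝ) :
    (x ⬝ᵥ y) ^ 2 ≤ (x ⬝ᵥ x) * (y ⬝ᵥ y) := by
  simpa only [dotProduct, sq] using Finset.sum_mul_sq_le_sq_mul_sq Finset.univ x y

lemma eta_self_pos_of_eta_eq_zero {v u : Fin (n + 1) → ℝ} (hv : eta v v < 0)
    (hvu : eta v u = 0) (hu : u ≠ 0) : 0 < eta u u := by
  rw [eta_eq_neg_mul_add_dotProduct] at hv hvu ⊢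
  set x := Fin.tail v
  set y := Fin.tail u
  by_contra! hle
  have hcs := sq_dotProduct_le x y
  have hxx : 0 ≤ x ⬝ᵥ x := by simpa using dotProduct_star_self_nonneg x
  have hyy : 0 ≤ y ⬝ᵥ y := by simpa using dotProduct_star_self_nonneg y
  have hcoef : 0 < v 0 * v 0 - x ⬝ᵥ x := by linarith
  have hu0 : u 0 = 0 := by
    have hsq : (v 0 * u 0) ^ 2 = (x ⬝ᵥ y) ^ 2 := by rw [neg_add_eq_zero.1 hvu]
    have hprod : (v 0 * v 0 - x ⬝ᵥ x) * (u 0 * u 0) ≤ 0 := by nlinarith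
    exact mul_self_eq_zero.1 (le_antisymm (nonpos_of_mul_nonpos_right hprod hcoef)
      (mul_self_nonneg _))
  have hy : y = 0 := dotProduct_self_eq_zero.1 (by nlinarith)
  exact hu (funext fun i => Fin.cases hu0 (fun j => congrFun hy j) i)

lemma eta_mul_eta_le_sq {v : Fin (n + 1) → ℝ} (hv : eta v v < 0) (w : Fin (n + 1) → ℝ) :
    eta v v * eta w w ≤ eta v w ^ 2 := by
  set c := eta v w / eta v v
  have horth : eta v (w - c • v) = 0 := by
    rw [eta_sub_smul_right, div_mul_cancel₀ _ hv.ne, sub_self]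
  have hnonneg : 0 ≤ eta (w - c • v) (w - c • v) := by
    rcases eq_or_ne (w - c • v) 0 with h | h
    · rw [h]
      simp [eta]
    · exact (eta_self_pos_of_eta_eq_zero hv horth h).le
  have hscale : eta v v * eta (w - c • v) (w - c • v) = eta v v * eta w w - eta v w ^ 2 := by
    rw [eta_sub_smul_self]
    simp only [c]
    field_simp [hv.ne]
    ring
  nlinarith

lemma neg_eta_mul_eta_add_mul_eta_sq_pos {p : ℝ} (hp : p < 1) {v w : Fin (n + 1) → ℝ}
    (hv : eta v v < 0) (hw : w ≠ 0) : 0 < -eta v v * eta w w + (2 - p) * eta v w ^ 2 := by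
  rcases eq_or_ne (eta v w) 0 with h | h
  · have hw_spacelike := eta_self_pos_of_eta_eq_zero hv h hw
    rw [h]
    nlinarith
  · have hreverse := eta_mul_eta_le_sq hv w
    have hsq : 0 < eta v w ^ 2 := by positivity
    nlinarith

lemma hasFDerivAt_eta_self (v : Fin (n + 1) → ℝ) :
    HasFDerivAt (fun u => eta u u) ((2 : ℝ) • minkowskiForm n v) v := by
  have h := (minkowskiForm n).hasFDerivAt_of_bilinear (hasFDerivAt_id v) (hasFDerivAt_id v)
  simp only [minkowskiForm_apply, id] at h
  refine h.congr_fderiv (ContinuousLinearMap.ext fun w => ?_)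
  simp [eta_comm, two_mul]

lemma hasFDerivAt_Lp {p : ℝ} (hp : p ≠ 0) {v : Fin (n + 1) → ℝ} (hv : eta v v < 0) :
    HasFDerivAt (Lp p) ((-eta v v) ^ (p / 2 - 1) • minkowskiForm n v) v := by
  have h : HasFDerivAt (Lp p) _ v :=
    ((hasFDerivAt_eta_self v).fun_neg.rpow_const (p := p / 2) (Or.inl (by linarith))).const_mul
      (-(1 / p))
  refine h.congr_fderiv (ContinuousLinearMap.ext fun w => ?_)
  simp only [one_div, smul_neg, neg_smul, neg_neg, smul_apply, minkowskiForm_apply, smul_eq_mul]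
  field_simp

lemma fderiv_Lp_eventuallyEq {p : ℝ} (hp : p ≠ 0) {v : Fin (n + 1) → ℝ} (hv : eta v v < 0) :
    fderiv ℝ (Lp p) =ᶠ[𝓝 v] fun u => (-eta u u) ^ (p / 2 - 1) • minkowskiForm n u := by
  have hopen : IsOpen {u : Fin (n + 1) → ℝ | eta u u < 0} :=
    isOpen_lt (continuous_iff_continuousAt.2 fun u => (hasFDerivAt_eta_self u).continuousAt)
      continuous_const
  filter_upwards [hopen.mem_nhds hv] with u hu using (hasFDerivAt_Lp hp hu).fderiv

lemma iteratedFDeriv_two_Lp_apply {p : ℝ} (hp : p ≠ 0) {v : Fin (n + 1) → ℝ} (hv : eta v v < 0)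
    (w : Fin (n + 1) → ℝ) :
    iteratedFDeriv ℝ 2 (Lp p) v ![w, w] =
      (-eta v v) ^ ((p - 4) / 2) * (-(eta v v) * eta w w + (2 - p) * (eta v w) ^ 2) := by
  have hQ : 0 < -eta v v := by linarith
  have hG : HasFDerivAt (fun u => (-eta u u) ^ (p / 2 - 1) • minkowskiForm n u) _ v :=
    ((hasFDerivAt_eta_self v).fun_neg.rpow_const (p := p / 2 - 1) (Or.inl hQ.ne')).smul
      (minkowskiForm n).hasFDerivAt
  rw [iteratedFDeriv_two_apply, (fderiv_Lp_eventuallyEq hp hv).fderiv_eq, hG.fderiv]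
  simp only [Matrix.cons_val_zero, Matrix.cons_val_one, Matrix.cons_val_fin_one, add_apply,
    smul_apply, ContinuousLinearMap.smulRight_apply, neg_apply, minkowskiForm_apply, smul_eq_mul,
    smul_neg, neg_smul, neg_mul]
  rw [show p / 2 - 1 - 1 = (p - 4) / 2 by ring, show p / 2 - 1 = (p - 4) / 2 + 1 by ring,
    Real.rpow_add hQ, Real.rpow_one]
  ring

theorem stmt_3 (n : ℕ) (p : ℝ) (hp : p ∈ Set.Ioo (0 : ℝ) 1)
    (v : Fin (n + 1) → ℝ) (hv : v ∈ FutureConeInt n) :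
    ∀ w : Fin (n + 1) → ℝ,
      iteratedFDeriv ℝ 2 (Lp p) v ![w, w]
        = (-eta v v) ^ ((p - 4) / 2) *
            (-(eta v v) * eta w w + (2 - p) * (eta v w) ^ 2) ∧
      (w ≠ 0 →
        0 < (-eta v v) ^ ((p - 4) / 2) *
              (-(eta v v) * eta w w + (2 - p) * (eta v w) ^ 2)) := by
  intro w
  refine ⟨iteratedFDeriv_two_Lp_apply hp.1.ne' hv.1 w, fun hw => mul_pos ?_ ?_⟩
  · exact Real.rpow_pos_of_pos (neg_pos.2 hv.1) _
  · exact neg_eta_mul_eta_add_mul_eta_sq_pos hp.2 hv.1 hw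
end

section
/- Fix p ∈ (0,1) and x, y ∈ ℝ^{1+n} with y − x ∈ C. For every C¹ curve γ : [0,1] → ℝ^{1+n} with γ(0) = x, γ(1) = y and γ′(t) ∈ C for all t ∈ [0,1], one has ∫₀¹ L_p(γ′(t)) dt ≥ L_p(y − x), with equality for the straight segment γ(t) = x + t(y − x). Consequently, the infimum of the action ∫₀¹ L_p(γ′(t)) dt over all such curves equals L_p(y − x). -/
/-- The future causal cone C = {v : η(v,v) ≤ 0 and v₀ ≥ 0}. -/
def FutureCone (n : ℕ) : Set (Fin (n + 1) → ℝ) :=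
  {v | eta v v ≤ 0 ∧ 0 ≤ v 0}

open Set

section Minkowski

variable {n : ℕ}

noncomputable def properTime (v : Fin (n + 1) → ℝ) : ℝ := √(-eta v v)

lemma properTime_nonneg (v : Fin (n + 1) → ℝ) : 0 ≤ properTime v := Real.sqrt_nonneg _

lemma eta_self (v : Fin (n + 1) → ℝ) : eta v v = -v 0 ^ 2 + ∑ i : Fin n, v i.succ ^ 2 := by
  simp only [eta, sq]

lemma eta_add_self (v w : Fin (n + 1) → ℝ) :
    eta (v + w) (v + w) = eta v v + 2 * eta v w + eta w w := by
  have expand (a b : ℝ) : (a + b) * (a + b) = a * a + 2 * (a * b) + b * b := by ring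
  simp only [eta, Pi.add_apply, expand, Finset.sum_add_distrib, ← Finset.mul_sum]
  ring

lemma eta_smul_self (a : ℝ) (v : Fin (n + 1) → ℝ) : eta (a • v) (a • v) = a ^ 2 * eta v v := by
  simp only [eta, Pi.smul_apply, smul_eq_mul, mul_mul_mul_comm a, ← Finset.mul_sum]
  ring

lemma sqrt_sq_sub_sq_mul_le {a b c d : ℝ} (hb : 0 ≤ b) (hd : 0 ≤ d) (hba : b ≤ a) (hdc : d ≤ c) :
    √(a ^ 2 - b ^ 2) * √(c ^ 2 - d ^ 2) ≤ a * c - b * d := by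
  rw [← Real.sqrt_mul (by nlinarith), Real.sqrt_le_iff]
  exact ⟨by nlinarith [mul_le_mul hba hdc hd (hb.trans hba)],
    by nlinarith [sq_nonneg (a * d - b * c)]⟩

lemma properTime_mul_le_neg_eta {v w : Fin (n + 1) → ℝ} (hv : v ∈ FutureCone n)
    (hw : w ∈ FutureCone n) : properTime v * properTime w ≤ -eta v w := by
  set b := √(∑ i : Fin n, v i.succ ^ 2)
  set d := √(∑ i : Fin n, w i.succ ^ 2)
  have hb2 : b ^ 2 = ∑ i : Fin n, v i.succ ^ 2 := Real.sq_sqrt (by positivity)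
  have hd2 : d ^ 2 = ∑ i : Fin n, w i.succ ^ 2 := Real.sq_sqrt (by positivity)
  have hv' : properTime v = √(v 0 ^ 2 - b ^ 2) := by
    rw [properTime, eta_self, hb2, neg_add', neg_neg]
  have hw' : properTime w = √(w 0 ^ 2 - d ^ 2) := by
    rw [properTime, eta_self, hd2, neg_add', neg_neg]
  have hba : b ≤ v 0 := by
    rw [Real.sqrt_le_iff]; exact ⟨hv.2, by linarith [eta_self v, hv.1]⟩
  have hdc : d ≤ w 0 := by
    rw [Real.sqrt_le_iff]; exact ⟨hw.2, by linarith [eta_self w, hw.1]⟩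
  have hcs : ∑ i : Fin n, v i.succ * w i.succ ≤ b * d :=
    Real.sum_mul_le_sqrt_mul_sqrt _ _ _
  rw [hv', hw', eta]
  linarith [sqrt_sq_sub_sq_mul_le (Real.sqrt_nonneg _) (Real.sqrt_nonneg _) hba hdc]

lemma FutureCone.add_mem {v w : Fin (n + 1) → ℝ} (hv : v ∈ FutureCone n)
    (hw : w ∈ FutureCone n) : v + w ∈ FutureCone n := by
  refine ⟨?_, add_nonneg hv.2 hw.2⟩
  rw [eta_add_self]
  linarith [hv.1, hw.1, properTime_mul_le_neg_eta hv hw,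
    mul_nonneg (properTime_nonneg v) (properTime_nonneg w)]

lemma FutureCone.smul_mem {a : ℝ} (ha : 0 ≤ a) {v : Fin (n + 1) → ℝ} (hv : v ∈ FutureCone n) :
    a • v ∈ FutureCone n := by
  refine ⟨?_, mul_nonneg ha hv.2⟩
  rw [eta_smul_self]
  exact mul_nonpos_of_nonneg_of_nonpos (sq_nonneg a) hv.1

lemma convex_futureCone : Convex ℝ (FutureCone n) :=
  fun _ hv _ hw _ _ ha hb _ =>
    FutureCone.add_mem (FutureCone.smul_mem ha hv) (FutureCone.smul_mem hb hw)

lemma continuous_eta_self : Continuous fun v : Fin (n + 1) → ℝ => eta v v := by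
  unfold eta; fun_prop

lemma isClosed_futureCone : IsClosed (FutureCone n) :=
  (isClosed_le continuous_eta_self continuous_const).inter
    (isClosed_le continuous_const (continuous_apply 0))

lemma properTime_smul {a : ℝ} (ha : 0 ≤ a) (v : Fin (n + 1) → ℝ) :
    properTime (a • v) = a * properTime v := by
  rw [properTime, eta_smul_self, ← mul_neg, Real.sqrt_mul (sq_nonneg a), Real.sqrt_sq ha,
    properTime]

lemma properTime_add_properTime_le {v w : Fin (n + 1) → ℝ} (hv : v ∈ FutureCone n)
    (hw : w ∈ FutureCone n) : properTime v + properTime w ≤ properTime (v + w) := by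
  have hv2 : properTime v ^ 2 = -eta v v := Real.sq_sqrt (by linarith [hv.1])
  have hw2 : properTime w ^ 2 = -eta w w := Real.sq_sqrt (by linarith [hw.1])
  refine Real.le_sqrt_of_sq_le ?_
  rw [eta_add_self]
  nlinarith [properTime_mul_le_neg_eta hv hw]

lemma Lp_eq_neg_properTime_rpow {p : ℝ} {v : Fin (n + 1) → ℝ} (hv : v ∈ FutureCone n) :
    Lp p v = -(1 / p * properTime v ^ p) := by
  rw [Lp, properTime, Real.sqrt_eq_rpow, ← Real.rpow_mul (by linarith [hv.1])]
  ring_nf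

lemma continuous_Lp {p : ℝ} (hp : 0 ≤ p) : Continuous (Lp (n := n) p) :=
  continuous_const.mul <| continuous_eta_self.neg.rpow_const fun _ => Or.inr (by positivity)

lemma convexOn_Lp {p : ℝ} (hp0 : 0 < p) (hp1 : p ≤ 1) : ConvexOn ℝ (FutureCone n) (Lp p) := by
  refine ⟨convex_futureCone, fun v hv w hw a b ha hb hab => ?_⟩
  rw [Lp_eq_neg_properTime_rpow (convex_futureCone hv hw ha hb hab),
    Lp_eq_neg_properTime_rpow hv, Lp_eq_neg_properTime_rpow hw]
  have hconcave : a * properTime v + b * properTime w ≤ properTime (a • v + b • w) := by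
    rw [← properTime_smul ha, ← properTime_smul hb]
    exact properTime_add_properTime_le (FutureCone.smul_mem ha hv) (FutureCone.smul_mem hb hw)
  have hpow : a * properTime v ^ p + b * properTime w ^ p ≤ properTime (a • v + b • w) ^ p :=
    calc a * properTime v ^ p + b * properTime w ^ p
        ≤ (a * properTime v + b * properTime w) ^ p :=
          (Real.concaveOn_rpow hp0.le hp1).2 (properTime_nonneg v) (properTime_nonneg w) ha hb hab
      _ ≤ properTime (a • v + b • w) ^ p :=
          Real.rpow_le_rpow (add_nonneg (mul_nonneg ha (properTime_nonneg v))
            (mul_nonneg hb (properTime_nonneg w))) hconcave hp0.le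
  have := mul_le_mul_of_nonneg_left hpow (one_div_pos.2 hp0).le
  simp only [smul_eq_mul]
  linarith

end Minkowski

lemma le_intervalIntegral_comp_deriv_of_convexOn {E : Type*} [NormedAddCommGroup E]
    [NormedSpace ℝ E] [CompleteSpace E] {s : Set E} {f : E → ℝ} (hf : ConvexOn ℝ s f)
    (hfc : ContinuousOn f s) (hs : IsClosed s) {γ γ' : ℝ → E}
    (hγ : ∀ t ∈ Icc (0 : ℝ) 1, HasDerivAt γ (γ' t) t) (hγ' : ContinuousOn γ' (Icc 0 1))
    (hγs : ∀ t ∈ Icc (0 : ℝ) 1, γ' t ∈ s) :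
    f (γ 1 - γ 0) ≤ ∫ t in (0 : ℝ)..1, f (γ' t) := by
  let μ := MeasureTheory.volume.restrict (Ioc (0 : ℝ) 1)
  have : MeasureTheory.IsProbabilityMeasure μ := ⟨by simp [μ]⟩
  have hsub : Ioc (0 : ℝ) 1 ⊆ Icc 0 1 := Ioc_subset_Icc_self
  have hfγ' : ContinuousOn (f ∘ γ') (Icc 0 1) := hfc.comp hγ' hγs
  have hftc : ∫ t, γ' t ∂μ = γ 1 - γ 0 := by
    rw [← intervalIntegral.integral_of_le zero_le_one]
    exact intervalIntegral.integral_eq_sub_of_hasDerivAt (by rwa [uIcc_of_le zero_le_one])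
      (hγ'.intervalIntegrable_of_Icc zero_le_one)
  rw [intervalIntegral.integral_of_le zero_le_one, ← hftc]
  exact hf.map_integral_le hfc hs
    (MeasureTheory.ae_restrict_of_forall_mem measurableSet_Ioc fun t ht => hγs t (hsub ht))
    ((hγ'.integrableOn_Icc).mono_set hsub) ((hfγ'.integrableOn_Icc).mono_set hsub)

/-- Every C¹ causal curve from x to y has action at least L_p(y-x), with the straight
segment attaining this value; hence L_p(y-x) is the least element of the set of actions. -/
theorem stmt_5 (n : ℕ) (p : ℝ) (hp : p ∈ Set.Ioo (0 : ℝ) 1)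
    (x y : Fin (n + 1) → ℝ) (hxy : y - x ∈ FutureCone n) :
    IsLeast {A : ℝ | ∃ γ γ' : ℝ → (Fin (n + 1) → ℝ),
        (∀ t ∈ Set.Icc (0 : ℝ) 1, HasDerivAt γ (γ' t) t) ∧
        ContinuousOn γ' (Set.Icc 0 1) ∧
        γ 0 = x ∧ γ 1 = y ∧
        (∀ t ∈ Set.Icc (0 : ℝ) 1, γ' t ∈ FutureCone n) ∧
        A = ∫ t in (0 : ℝ)..1, Lp p (γ' t)}
      (Lp p (y - x)) := by
  constructor
  · refine ⟨fun t => x + t • (y - x), fun _ => y - x, fun t _ => ?_, continuousOn_const,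
      by simp, by simp, fun _ _ => hxy, by simp⟩
    simpa using ((hasDerivAt_id t).smul_const (y - x)).const_add x
  · rintro A ⟨γ, γ', hγ, hγ', rfl, rfl, hγC, rfl⟩
    exact le_intervalIntegral_comp_deriv_of_convexOn (convexOn_Lp hp.1 hp.2.le)
      (continuous_Lp hp.1.le).continuousOn isClosed_futureCone hγ hγ' hγC
end
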